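/- Suppose 1 < q < p and that V, f, g satisfy (V), (f), (g). Let a > 0, let u ∈ S(a) be not almost everywhere zero, and let λ ∈ ℝ be such that (u, λ) is a weak solution of (−Δ)^s u + V u = λ u + f (I_α * (f|u|^q)) |u|^{q−2} u + g (I_α * (g|u|^p)) |u|^{p−2} u. Then λ a < 2q J(u); in particular, if J(u) = m(a) then λ < 2q m(a) / a. -/

import Mathlib

open MeasureTheory Filter Topology
open scoped ENNReal

noncomputable section

/-- `ℝ^N`. -/
abbrev RN (N : ℕ) : Type := EuclideanSpace ℝ (Fin N)

/-- The Riesz potential constant `A_α = Γ((N−α)/2) / (Γ(α/2) π^{N/2} 2^α)`. -/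
def rieszA (N : ℕ) (α : ℝ) : ℝ :=
  Real.Gamma (((N : ℝ) - α) / 2) /
    (Real.Gamma (α / 2) * Real.pi ^ ((N : ℝ) / 2) * (2 : ℝ) ^ α)

/-- The squared Gagliardo energy `‖u‖² = (C(N,s)/2) ∫∫ |u(x)−u(y)|²/|x−y|^{N+2s}`,
as an extended nonnegative real. -/
def gagSq (N : ℕ) (s Cns : ℝ) (u : RN N → ℝ) : ℝ≥0∞ :=
  ENNReal.ofReal (Cns / 2) *
    ∫⁻ x : RN N, ∫⁻ y : RN N,
      ENNReal.ofReal (|u x - u y| ^ 2 / ‖x - y‖ ^ ((N : ℝ) + 2 * s))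

/-- The squared Gagliardo energy `‖u‖²` as a real number. -/
def gnormSq (N : ℕ) (s Cns : ℝ) (u : RN N → ℝ) : ℝ := (gagSq N s Cns u).toReal

/-- The Gagliardo energy norm `‖u‖`. -/
def gnorm (N : ℕ) (s Cns : ℝ) (u : RN N → ℝ) : ℝ := Real.sqrt (gnormSq N s Cns u)

/-- The fractional Sobolev space `H^s(ℝ^N) = {u ∈ L² : ‖u‖ < ∞}`. -/
def HsSet (N : ℕ) (s Cns : ℝ) : Set (RN N → ℝ) :=
  {u | MemLp u 2 (volume : Measure (RN N)) ∧ gagSq N s Cns u < ⊤}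

/-- The Riesz interaction `D_α(h₁, h₂) = A_α ∫∫ h₁(x) h₂(y) |x−y|^{α−N}`. -/
def rieszD (N : ℕ) (α : ℝ) (h₁ h₂ : RN N → ℝ) : ℝ :=
  rieszA N α *
    (∫⁻ x : RN N, ∫⁻ y : RN N,
      ENNReal.ofReal (h₁ x * h₂ y * ‖x - y‖ ^ (α - (N : ℝ)))).toReal

/-- `Q(u) = D_α(f|u|^q, f|u|^q)`. -/
def Qf (N : ℕ) (α : ℝ) (f : RN N → ℝ) (q : ℝ) (u : RN N → ℝ) : ℝ :=
  rieszD N α (fun x => f x * |u x| ^ q) (fun x => f x * |u x| ^ q)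

/-- The energy functional
`J(u) = ‖u‖²/2 + (1/2)∫ V u² − Q(u)/(2q) − P(u)/(2p)`. -/
def Jfun (N : ℕ) (s Cns α : ℝ) (V f g : RN N → ℝ) (q p : ℝ) (u : RN N → ℝ) : ℝ :=
  (1 / 2) * gnormSq N s Cns u + (1 / 2) * (∫ x : RN N, V x * (u x) ^ 2)
    - Qf N α f q u / (2 * q) - Qf N α g p u / (2 * p)

/-- The mass constraint sphere `S(a) = {u ∈ H^s : ∫ u² = a}`. -/
def Sset (N : ℕ) (s Cns : ℝ) (a : ℝ) : Set (RN N → ℝ) :=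
  {u | u ∈ HsSet N s Cns ∧ (∫ x : RN N, (u x) ^ 2) = a}

/-- `m(a) = inf_{u ∈ S(a)} J(u)`. -/
def mval (N : ℕ) (s Cns α : ℝ) (V f g : RN N → ℝ) (q p a : ℝ) : ℝ :=
  sInf (Jfun N s Cns α V f g q p '' Sset N s Cns a)

/-- The limit energy functional
`J_∞(u) = ‖u‖²/2 + (V_∞/2)∫ u² − (f_∞²/(2q)) D_α(|u|^q,|u|^q) − (g_∞²/(2p)) D_α(|u|^p,|u|^p)`. -/
def Jinf (N : ℕ) (s Cns α : ℝ) (Vinf finf ginf : ℝ) (q p : ℝ) (u : RN N → ℝ) : ℝ :=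
  (1 / 2) * gnormSq N s Cns u + (Vinf / 2) * (∫ x : RN N, (u x) ^ 2)
    - (finf ^ 2 / (2 * q)) * rieszD N α (fun x => |u x| ^ q) (fun x => |u x| ^ q)
    - (ginf ^ 2 / (2 * p)) * rieszD N α (fun x => |u x| ^ p) (fun x => |u x| ^ p)

/-- `m_∞(a) = inf_{u ∈ S(a)} J_∞(u)`. -/
def mvalInf (N : ℕ) (s Cns α : ℝ) (Vinf finf ginf : ℝ) (q p a : ℝ) : ℝ :=
  sInf (Jinf N s Cns α Vinf finf ginf q p '' Sset N s Cns a)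

/-- The energy functional with the extra autonomous `k`-term:
`I(u) = ‖u‖²/2 + (1/2)∫ V u² − Q(u)/(2q) − D_α(|u|^k,|u|^k)/(2k) − P(u)/(2p)`. -/
def Ifun (N : ℕ) (s Cns α : ℝ) (V f g : RN N → ℝ) (q k p : ℝ) (u : RN N → ℝ) : ℝ :=
  (1 / 2) * gnormSq N s Cns u + (1 / 2) * (∫ x : RN N, V x * (u x) ^ 2)
    - Qf N α f q u / (2 * q)
    - rieszD N α (fun x => |u x| ^ k) (fun x => |u x| ^ k) / (2 * k)
    - Qf N α g p u / (2 * p)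

/-- `(u, λ)` is a weak solution of
`(−Δ)^s u + V u = λ u + f (I_α * (f|u|^q)) |u|^{q−2} u + g (I_α * (g|u|^p)) |u|^{p−2} u`. -/
def isWeakSol (N : ℕ) (s Cns α : ℝ) (V f g : RN N → ℝ) (q p : ℝ)
    (u : RN N → ℝ) (lam : ℝ) : Prop :=
  ∀ φ ∈ HsSet N s Cns,
    (Cns / 2) * (∫ x : RN N, ∫ y : RN N,
        (u x - u y) * (φ x - φ y) / ‖x - y‖ ^ ((N : ℝ) + 2 * s))
      + (∫ x : RN N, V x * u x * φ x)
    = lam * (∫ x : RN N, u x * φ x)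
      + rieszA N α * (∫ x : RN N, ∫ y : RN N,
          f x * f y * |u y| ^ q * |u x| ^ (q - 2) * u x * φ x * ‖x - y‖ ^ (α - (N : ℝ)))
      + rieszA N α * (∫ x : RN N, ∫ y : RN N,
          g x * g y * |u y| ^ p * |u x| ^ (p - 2) * u x * φ x * ‖x - y‖ ^ (α - (N : ℝ)))

/-- `(u, λ)` is a weak solution of the equation with the additional autonomous `k`-term
`(−Δ)^s u + V u = λ u + f (I_α * (f|u|^q)) |u|^{q−2} u + (I_α * |u|^k) |u|^{k−2} u
  + g (I_α * (g|u|^p)) |u|^{p−2} u`. -/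
def isWeakSolK (N : ℕ) (s Cns α : ℝ) (V f g : RN N → ℝ) (q k p : ℝ)
    (u : RN N → ℝ) (lam : ℝ) : Prop :=
  ∀ φ ∈ HsSet N s Cns,
    (Cns / 2) * (∫ x : RN N, ∫ y : RN N,
        (u x - u y) * (φ x - φ y) / ‖x - y‖ ^ ((N : ℝ) + 2 * s))
      + (∫ x : RN N, V x * u x * φ x)
    = lam * (∫ x : RN N, u x * φ x)
      + rieszA N α * (∫ x : RN N, ∫ y : RN N,
          f x * f y * |u y| ^ q * |u x| ^ (q - 2) * u x * φ x * ‖x - y‖ ^ (α - (N : ℝ)))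
      + rieszA N α * (∫ x : RN N, ∫ y : RN N,
          |u y| ^ k * |u x| ^ (k - 2) * u x * φ x * ‖x - y‖ ^ (α - (N : ℝ)))
      + rieszA N α * (∫ x : RN N, ∫ y : RN N,
          g x * g y * |u y| ^ p * |u x| ^ (p - 2) * u x * φ x * ‖x - y‖ ^ (α - (N : ℝ)))

/-!
Testing the equation against `φ = u` gives `‖u‖² + ∫ V u² = λ a + Q̃ + P̃`, where `Q̃`, `P̃` are the
Bochner double integrals of the Riesz interactions; they dominate `Q(u)`, `P(u)`, which are
`toReal` of lower integrals (and so vanish when those are infinite). Hence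
`2q J(u) - λ a ≥ (q - 1)(‖u‖² + ∫ V u²) + (1 - q/p) P(u)`, and this is positive because `V ≥ 0`,
`q < p` and `‖u‖ > 0`: a function of vanishing Gagliardo energy is a.e. constant, and a constant
has integral `0` over the infinite measure space `ℝ^N`, contradicting `∫ u² = a > 0`.
-/

open Function

namespace MeasureTheory

variable {X Y : Type*} [MeasurableSpace X] [MeasurableSpace Y]
  {μ : Measure X} {ν : Measure Y}

theorem integral_integral_eq_toReal_lintegral_lintegral [SFinite μ] [SFinite ν] {F : X → Y → ℝ}
    (hF : AEStronglyMeasurable (uncurry F) (μ.prod ν)) (hnn : ∀ x y, 0 ≤ F x y)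
    (hfin : ∫⁻ x, ∫⁻ y, ENNReal.ofReal (F x y) ∂ν ∂μ ≠ ∞) :
    ∫ x, ∫ y, F x y ∂ν ∂μ = (∫⁻ x, ∫⁻ y, ENNReal.ofReal (F x y) ∂ν ∂μ).toReal := by
  have hprod : ∫⁻ z, ENNReal.ofReal (uncurry F z) ∂μ.prod ν
      = ∫⁻ x, ∫⁻ y, ENNReal.ofReal (F x y) ∂ν ∂μ :=
    lintegral_prod _ hF.aemeasurable.ennreal_ofReal
  have hint : Integrable (uncurry F) (μ.prod ν) :=
    ⟨hF, (hasFiniteIntegral_iff_ofReal (Eventually.of_forall fun z : X × Y => hnn z.1 z.2)).2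
      (hprod ▸ hfin.lt_top)⟩
  rw [integral_integral hint, ← hprod]
  exact integral_eq_lintegral_of_nonneg_ae (Eventually.of_forall fun z => hnn z.1 z.2) hF

theorem toReal_lintegral_lintegral_le_integral_integral [SFinite μ] [SFinite ν] {F : X → Y → ℝ}
    (hF : AEStronglyMeasurable (uncurry F) (μ.prod ν)) (hnn : ∀ x y, 0 ≤ F x y) :
    (∫⁻ x, ∫⁻ y, ENNReal.ofReal (F x y) ∂ν ∂μ).toReal ≤ ∫ x, ∫ y, F x y ∂ν ∂μ := by
  by_cases hfin : ∫⁻ x, ∫⁻ y, ENNReal.ofReal (F x y) ∂ν ∂μ = ∞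
  · rw [hfin, ENNReal.toReal_top]
    exact integral_nonneg fun x => integral_nonneg (hnn x)
  · exact (integral_integral_eq_toReal_lintegral_lintegral hF hnn hfin).ge

theorem ae_prod_nonpos_of_lintegral_lintegral_eq_zero [SFinite ν] {F : X → Y → ℝ}
    (hF : AEMeasurable (uncurry F) (μ.prod ν))
    (h0 : ∫⁻ x, ∫⁻ y, ENNReal.ofReal (F x y) ∂ν ∂μ = 0) :
    ∀ᵐ z ∂μ.prod ν, uncurry F z ≤ 0 := by
  have hprod : ∫⁻ z, ENNReal.ofReal (uncurry F z) ∂μ.prod ν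
      = ∫⁻ x, ∫⁻ y, ENNReal.ofReal (F x y) ∂ν ∂μ :=
    lintegral_prod _ hF.ennreal_ofReal
  rw [← hprod, lintegral_eq_zero_iff' hF.ennreal_ofReal] at h0
  filter_upwards [h0] with z hz
  exact ENNReal.ofReal_eq_zero.1 hz

theorem exists_ae_eq_const_of_ae_prod_eq [SFinite μ] [NeZero μ] {Z : Type*} {u : X → Z}
    (h : ∀ᵐ z ∂μ.prod μ, u z.1 = u z.2) : ∃ c, u =ᵐ[μ] fun _ => c := by
  obtain ⟨x₀, hx₀⟩ := (Measure.ae_ae_of_ae_prod h).exists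
  exact ⟨u x₀, hx₀.mono fun _ hy => hy.symm⟩

/-- A nonzero constant is not integrable on an infinite measure space, so its integral is the
junk value `0`. -/
theorem integral_eq_zero_of_ae_prod_eq [SFinite μ] {E : Type*} [NormedAddCommGroup E]
    [NormedSpace ℝ E] [CompleteSpace E]
    {Z : Type*} {u : X → Z} (hμ : μ Set.univ = ∞) (h : ∀ᵐ z ∂μ.prod μ, u z.1 = u z.2)
    (G : Z → E) : ∫ x, G (u x) ∂μ = 0 := by
  have : NeZero μ := ⟨fun h0 => by simp [h0] at hμ⟩
  obtain ⟨c, hc⟩ := exists_ae_eq_const_of_ae_prod_eq h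
  have hGc : (fun x => G (u x)) =ᵐ[μ] fun _ => G c := hc.fun_comp G
  rw [integral_congr_ae hGc, integral_const, measureReal_def, hμ]
  simp

end MeasureTheory

theorem Real.abs_rpow_sub_two_mul_self_mul_self (t : ℝ) {r : ℝ} (hr : r ≠ 0) :
    |t| ^ (r - 2) * t * t = |t| ^ r := by
  rcases eq_or_ne t 0 with rfl | ht
  · simp [Real.zero_rpow hr]
  · rw [mul_assoc, ← abs_mul_abs_self, ← sq, ← Real.rpow_natCast,
      ← Real.rpow_add (abs_pos.2 ht)]
    norm_num

section

variable {N : ℕ}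

theorem rieszA_pos {α : ℝ} (hα0 : 0 < α) (hαN : α < N) : 0 < rieszA N α := by
  have := Real.Gamma_pos_of_pos (s := ((N : ℝ) - α) / 2) (by linarith)
  have := Real.Gamma_pos_of_pos (s := α / 2) (by linarith)
  unfold rieszA
  positivity

theorem aemeasurable_uncurry_gagliardo {u : RN N → ℝ} (hu : AEMeasurable u) (r : ℝ) :
    AEMeasurable (uncurry fun x y : RN N => |u x - u y| ^ 2 / ‖x - y‖ ^ r)
      (volume.prod volume) :=
  ((hu.comp_fst.sub hu.comp_snd).abs.pow_const 2).div
    ((measurable_fst.sub measurable_snd).norm.pow_const r).aemeasurable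

theorem aemeasurable_uncurry_riesz {h₁ h₂ : RN N → ℝ} (hm₁ : AEMeasurable h₁)
    (hm₂ : AEMeasurable h₂) (r : ℝ) :
    AEMeasurable (uncurry fun x y : RN N => h₁ x * h₂ y * ‖x - y‖ ^ r)
      (volume.prod volume) :=
  (hm₁.comp_fst.mul hm₂.comp_snd).mul
    ((measurable_fst.sub measurable_snd).norm.pow_const r).aemeasurable

theorem volume_univ_eq_top (hN : 0 < N) : (volume : Measure (RN N)) Set.univ = ∞ := by
  have : Nonempty (Fin N) := Fin.pos_iff_nonempty.1 hN
  exact measure_univ_of_isAddLeftInvariant _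

theorem eq_of_sq_sub_div_rpow_nonpos {u : RN N → ℝ} {x y : RN N} {r : ℝ}
    (h : |u x - u y| ^ 2 / ‖x - y‖ ^ r ≤ 0) : u x = u y := by
  rcases eq_or_ne x y with rfl | hxy
  · rfl
  have hd : 0 < ‖x - y‖ ^ r := Real.rpow_pos_of_pos (norm_pos_iff.2 (sub_ne_zero.2 hxy)) r
  rw [div_nonpos_iff] at h
  rcases h with ⟨_, h⟩ | ⟨h, _⟩
  · linarith
  · nlinarith [sq_abs (u x - u y)]

theorem lintegral_gagliardo_ne_top {s Cns : ℝ} (hCns : 0 < Cns) {u : RN N → ℝ}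
    (hfin : gagSq N s Cns u < ∞) :
    ∫⁻ x, ∫⁻ y, ENNReal.ofReal (|u x - u y| ^ 2 / ‖x - y‖ ^ ((N : ℝ) + 2 * s)) ≠ ∞ := by
  intro h
  rw [gagSq, h, ENNReal.mul_top (by simpa using hCns)] at hfin
  exact lt_irrefl _ hfin

theorem gnormSq_eq_integral {s Cns : ℝ} (hCns : 0 < Cns) {u : RN N → ℝ} (hu : AEMeasurable u)
    (hfin : gagSq N s Cns u < ∞) :
    gnormSq N s Cns u =
      Cns / 2 * ∫ x, ∫ y, |u x - u y| ^ 2 / ‖x - y‖ ^ ((N : ℝ) + 2 * s) := by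
  rw [integral_integral_eq_toReal_lintegral_lintegral
      (aemeasurable_uncurry_gagliardo hu _).aestronglyMeasurable (fun x y => by positivity)
      (lintegral_gagliardo_ne_top hCns hfin),
    gnormSq, gagSq, ENNReal.toReal_mul, ENNReal.toReal_ofReal (by positivity)]

theorem gnormSq_pos {s Cns : ℝ} (hN : 0 < N) (hCns : 0 < Cns) {u : RN N → ℝ}
    (hu : AEMeasurable u) (hfin : gagSq N s Cns u < ∞) (hu2 : ∫ x, u x ^ 2 ≠ 0) :
    0 < gnormSq N s Cns u := by
  refine ENNReal.toReal_pos (mul_ne_zero (by simpa using hCns) fun h0 => hu2 ?_) hfin.ne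
  refine integral_eq_zero_of_ae_prod_eq (volume_univ_eq_top hN) ?_ (· ^ 2)
  filter_upwards [ae_prod_nonpos_of_lintegral_lintegral_eq_zero
    (aemeasurable_uncurry_gagliardo hu _) h0] with z hz
  exact eq_of_sq_sub_div_rpow_nonpos hz

theorem rieszD_nonneg {α : ℝ} (hA : 0 ≤ rieszA N α) (h₁ h₂ : RN N → ℝ) :
    0 ≤ rieszD N α h₁ h₂ :=
  mul_nonneg hA ENNReal.toReal_nonneg

theorem rieszD_le_integral {α : ℝ} (hA : 0 ≤ rieszA N α) {h₁ h₂ : RN N → ℝ}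
    (hm₁ : AEMeasurable h₁) (hm₂ : AEMeasurable h₂) (h₁0 : ∀ x, 0 ≤ h₁ x) (h₂0 : ∀ x, 0 ≤ h₂ x) :
    rieszD N α h₁ h₂ ≤ rieszA N α * ∫ x, ∫ y, h₁ x * h₂ y * ‖x - y‖ ^ (α - (N : ℝ)) :=
  mul_le_mul_of_nonneg_left (toReal_lintegral_lintegral_le_integral_integral
    (aemeasurable_uncurry_riesz hm₁ hm₂ _).aestronglyMeasurable
    fun x y => by have := h₁0 x; have := h₂0 y; positivity) hA

theorem Qf_le_integral {α : ℝ} (hA : 0 ≤ rieszA N α) {f u : RN N → ℝ} (hfm : Measurable f)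
    (hf : ∀ x, 0 ≤ f x) (hu : AEMeasurable u) (q : ℝ) :
    Qf N α f q u ≤ rieszA N α *
      ∫ x, ∫ y, (f x * |u x| ^ q) * (f y * |u y| ^ q) * ‖x - y‖ ^ (α - (N : ℝ)) :=
  have hm : AEMeasurable fun x => f x * |u x| ^ q := hfm.aemeasurable.mul (hu.abs.pow_const q)
  have h0 : ∀ x, 0 ≤ f x * |u x| ^ q := fun x => by have := hf x; positivity
  rieszD_le_integral hA hm hm h0 h0

theorem isWeakSol.test_self {s Cns α : ℝ} {V f g : RN N → ℝ} {q p : ℝ} {u : RN N → ℝ}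
    {lam : ℝ} (hsol : isWeakSol N s Cns α V f g q p u lam) (hu : u ∈ HsSet N s Cns)
    (hq : q ≠ 0) (hp : p ≠ 0) :
    Cns / 2 * (∫ x, ∫ y, |u x - u y| ^ 2 / ‖x - y‖ ^ ((N : ℝ) + 2 * s))
      + ∫ x, V x * u x ^ 2
    = lam * (∫ x, u x ^ 2)
      + rieszA N α * (∫ x, ∫ y, (f x * |u x| ^ q) * (f y * |u y| ^ q) * ‖x - y‖ ^ (α - (N : ℝ)))
      + rieszA N α * (∫ x, ∫ y, (g x * |u x| ^ p) * (g y * |u y| ^ p) * ‖x - y‖ ^ (α - (N : ℝ)))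
    := by
  have hpot : ∀ {r : ℝ}, r ≠ 0 → ∀ (h : RN N → ℝ) (x y : RN N),
      h x * h y * |u y| ^ r * |u x| ^ (r - 2) * u x * u x * ‖x - y‖ ^ (α - (N : ℝ))
        = (h x * |u x| ^ r) * (h y * |u y| ^ r) * ‖x - y‖ ^ (α - (N : ℝ)) := by
    intro r hr h x y
    rw [← Real.abs_rpow_sub_two_mul_self_mul_self (u x) hr]
    ring
  have hE := hsol u hu
  simp only [hpot hq, hpot hp, ← sq, mul_assoc (V _), sq_abs] at hE ⊢
  exact hE

end

theorem statement17_general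
    (N : ℕ) (s Cns α : ℝ)
    (hs0 : 0 < s) (hN : 2 * s < (N : ℝ))
    (hα0 : 0 < α) (hαN : α < (N : ℝ)) (hCns : 0 < Cns)
    (q p : ℝ) (hq1 : 1 < q) (hqp : q < p)
    (V : RN N → ℝ)
    (hV0 : ∀ x, 0 ≤ V x)
    (f g : RN N → ℝ) (finf ginf : ℝ)
    (hfmeas : Measurable f) (hgmeas : Measurable g)
    (hfinf : 0 < finf) (hginf : 0 < ginf)
    (hflb : ∀ x, finf ≤ f x)
    (hglb : ∀ x, ginf ≤ g x)
    (a : ℝ) (ha : 0 < a)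
    (u : RN N → ℝ) (hu : u ∈ Sset N s Cns a)
    (lam : ℝ)
    (hsol : isWeakSol N s Cns α V f g q p u lam) :
    lam * a < 2 * q * Jfun N s Cns α V f g q p u ∧
    (Jfun N s Cns α V f g q p u = mval N s Cns α V f g q p a →
      lam < 2 * q * mval N s Cns α V f g q p a / a) := by
  obtain ⟨⟨huL2, hufin⟩, hua⟩ := hu
  have hum : AEMeasurable u := huL2.aestronglyMeasurable.aemeasurable
  have hN0 : 0 < N := by exact_mod_cast (by linarith : (0 : ℝ) < N)
  have hA : 0 ≤ rieszA N α := (rieszA_pos hα0 hαN).le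
  have hQ := Qf_le_integral hA hfmeas (fun x => (hfinf.trans_le (hflb x)).le) hum q
  have hP := Qf_le_integral hA hgmeas (fun x => (hginf.trans_le (hglb x)).le) hum p
  have hP0 : 0 ≤ Qf N α g p u := rieszD_nonneg hA _ _
  have hid := hsol.test_self ⟨huL2, hufin⟩ (by linarith) (by linarith)
  rw [← gnormSq_eq_integral hCns hum hufin, hua] at hid
  have hG : 0 < gnormSq N s Cns u := gnormSq_pos hN0 hCns hum hufin (hua ▸ ha.ne')
  have hV : 0 ≤ ∫ x, V x * u x ^ 2 := integral_nonneg fun x => mul_nonneg (hV0 x) (sq_nonneg _)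
  have hqpP : q / p * Qf N α g p u ≤ Qf N α g p u :=
    mul_le_of_le_one_left hP0 ((div_le_one (by linarith)).2 hqp.le)
  have hJ : 2 * q * Jfun N s Cns α V f g q p u = q * gnormSq N s Cns u
      + q * (∫ x, V x * u x ^ 2) - Qf N α f q u - q / p * Qf N α g p u := by
    unfold Jfun
    field_simp
  have hlt : lam * a < 2 * q * Jfun N s Cns α V f g q p u := by
    linarith [mul_pos (sub_pos.2 hq1) hG, mul_nonneg (sub_pos.2 hq1).le hV]
  refine ⟨hlt, fun hJm => ?_⟩
  rw [lt_div_iff₀ ha, ← hJm]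
  exact hlt

/-- Lagrange-multiplier bound from the proofs of Theorems 1.4 and 1.5.
If `1 < q < p` and `(u, λ)` is a weak solution with `u ∈ S(a)` not a.e. zero, then
`λ a < 2q J(u)`; in particular if `J(u) = m(a)` then `λ < 2q m(a)/a`. -/
theorem statement17
    (N : ℕ) (s Cns α : ℝ)
    (hs0 : 0 < s) (hs1 : s < 1) (hN : 2 * s < (N : ℝ))
    (hα0 : 0 < α) (hαN : α < (N : ℝ)) (hCns : 0 < Cns)
    (q p : ℝ) (hq1 : 1 < q) (hqp : q < p)
    (V : RN N → ℝ) (Vinf : ℝ)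
    (hVmeas : Measurable V)
    (hV0 : ∀ x, 0 ≤ V x) (hVub : ∀ x, V x ≤ Vinf)
    (hVtend : Tendsto V (cocompact (RN N)) (𝓝 Vinf))
    (f g : RN N → ℝ) (finf fmax ginf gmax : ℝ)
    (hfmeas : Measurable f) (hgmeas : Measurable g)
    (hfinf : 0 < finf) (hginf : 0 < ginf)
    (hftend : Tendsto f (cocompact (RN N)) (𝓝 finf))
    (hgtend : Tendsto g (cocompact (RN N)) (𝓝 ginf))
    (hflb : ∀ x, finf ≤ f x) (hfub : ∀ x, f x ≤ fmax)
    (hglb : ∀ x, ginf ≤ g x) (hgub : ∀ x, g x ≤ gmax)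
    (hfmax : fmax = ⨆ x, f x) (hgmax : gmax = ⨆ x, g x)
    (a : ℝ) (ha : 0 < a)
    (u : RN N → ℝ) (hu : u ∈ Sset N s Cns a)
    (hune : ¬ (u =ᵐ[(volume : Measure (RN N))] (0 : RN N → ℝ)))
    (lam : ℝ)
    (hsol : isWeakSol N s Cns α V f g q p u lam) :
    lam * a < 2 * q * Jfun N s Cns α V f g q p u ∧
    (Jfun N s Cns α V f g q p u = mval N s Cns α V f g q p a →
      lam < 2 * q * mval N s Cns α V f g q p a / a) :=
  statement17_general N s Cns α hs0 hN hα0 hαN hCns q p hq1 hqp V hV0 f g finf ginf hfmeas hgmeas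
    hfinf hginf hflb hglb a ha u hu lam hsol
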